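/- arXiv:1105.3299 — 5 statements merged into one kernel-verified Lean document; each statement's English description precedes it below -/
import Mathlib

section
/- For every δ ∈ [0, 2/3) and every ω ∈ [0,1], ω(1−ω) + δ(1 − 3ω/4)² − (1−δ)ω² ≤ 4(1 + 5δ − 4δ²)/(32 − 25δ). -/
/-! The left-hand side is the concave quadratic
`-(32 - 25δ)/16 · ω² + (2 - 3δ)/2 · ω + δ` in `ω`, and the right-hand side is its maximum
over all real `ω`, attained at `ω = 4(2 - 3δ)/(32 - 25δ)`. -/

theorem quadratic_le_neg_discrim_div {K : Type*} [Field K] [LinearOrder K] [IsStrictOrderedRing K]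
    {a : K} (ha : a < 0) (b c x : K) :
    a * (x * x) + b * x + c ≤ -discrim a b c / (4 * a) := by
  have hsquare : -discrim a b c / (4 * a) - (a * (x * x) + b * x + c) =
      -a * (x + b / (2 * a)) ^ 2 := by
    have := ha.ne
    simp only [discrim]
    field_simp
    ring
  have := mul_nonneg (neg_nonneg.2 ha.le) (sq_nonneg (x + b / (2 * a)))
  linarith

theorem omega_bound'_general (δ ω : ℝ) (h1 : δ < 2 / 3) :
    ω * (1 - ω) + δ * (1 - 3 * ω / 4) ^ 2 - (1 - δ) * ω ^ 2 ≤
      4 * (1 + 5 * δ - 4 * δ ^ 2) / (32 - 25 * δ) := by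
  have hpos : 0 < 32 - 25 * δ := by linarith
  calc ω * (1 - ω) + δ * (1 - 3 * ω / 4) ^ 2 - (1 - δ) * ω ^ 2
      = -(32 - 25 * δ) / 16 * (ω * ω) + (2 - 3 * δ) / 2 * ω + δ := by ring
    _ ≤ -discrim (-(32 - 25 * δ) / 16) ((2 - 3 * δ) / 2) δ / (4 * (-(32 - 25 * δ) / 16)) :=
      quadratic_le_neg_discrim_div (by linarith) _ _ _
    _ = 4 * (1 + 5 * δ - 4 * δ ^ 2) / (32 - 25 * δ) := by
      simp only [discrim]
      field_simp
      ring

theorem omega_bound' (δ ω : ℝ) (h0 : 0 ≤ δ) (h1 : δ < 2 / 3)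
    (hω0 : 0 ≤ ω) (hω1 : ω ≤ 1) :
    ω * (1 - ω) + δ * (1 - 3 * ω / 4) ^ 2 - (1 - δ) * ω ^ 2 ≤
      4 * (1 + 5 * δ - 4 * δ ^ 2) / (32 - 25 * δ) :=
  omega_bound'_general δ ω h1
end

section
/- For every δ ∈ [0, 1] and every ω ∈ [0,1], (2−δ)ω(1−ω) + δ(1 − 3ω/4)² ≤ 8(2−δ)/(32 − 25δ). -/
/- As a function of ω the left side is a concave quadratic with leading coefficient
-(32 - 25δ)/16; its maximum over all of ℝ, attained at ω = (16 - 20δ)/(32 - 25δ),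
is exactly 8(2 - δ)/(32 - 25δ). -/
lemma omega_bound_sub_eq (δ ω : ℝ) (hδ : 32 - 25 * δ ≠ 0) :
    8 * (2 - δ) / (32 - 25 * δ) - ((2 - δ) * ω * (1 - ω) + δ * (1 - 3 * ω / 4) ^ 2) =
      ((32 - 25 * δ) * ω - (16 - 20 * δ)) ^ 2 / (16 * (32 - 25 * δ)) := by
  rw [div_sub' hδ, div_eq_div_iff hδ (mul_ne_zero (by norm_num) hδ)]
  ring

theorem omega_bound''_general (δ ω : ℝ) (h1 : δ ≤ 1) :
    (2 - δ) * ω * (1 - ω) + δ * (1 - 3 * ω / 4) ^ 2 ≤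
      8 * (2 - δ) / (32 - 25 * δ) := by
  have hδ : 0 < 32 - 25 * δ := by linarith
  rw [← sub_nonneg, omega_bound_sub_eq δ ω hδ.ne']
  positivity

theorem omega_bound'' (δ ω : ℝ) (h0 : 0 ≤ δ) (h1 : δ ≤ 1)
    (hω0 : 0 ≤ ω) (hω1 : ω ≤ 1) :
    (2 - δ) * ω * (1 - ω) + δ * (1 - 3 * ω / 4) ^ 2 ≤
      8 * (2 - δ) / (32 - 25 * δ) :=
  omega_bound''_general δ ω h1
end

section
/- For every 0 < q ≤ 1, every δ ∈ [0,1), and every ω ∈ [0,1], ω^{(2−q)/q}(1−ω) + δ − (1−δ)ω^{2/q} ≤ δ + (q/2^{2/q})·((2−q)/(2−δ))^{2/q − 1}, with the maximum over ω attained at ω = (2−q)/(2(2−δ)). -/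
/-!
Put `a = (2 - q) / q` and `c = 2 - δ`. Since `ω ^ (2 / q) = ω ^ a * ω`, the left-hand side is
`ω ^ a * (1 - c * ω) + δ`. On `ω ≥ 0` the function `t ^ a * (1 - c * t)` is maximised at
`t⋆ = a / ((a + 1) * c) = (2 - q) / (2 * (2 - δ))` by weighted AM-GM applied to `t / t⋆` and
`a + 1 - a * t / t⋆`, and its maximum value `t⋆ ^ a / (a + 1)` is the stated bound.
-/

open Real Set

lemma rpow_mul_add_one_sub_mul_le_one {a s : ℝ} (ha : 0 < a) (hs : 0 ≤ s) :
    s ^ a * (a + 1 - a * s) ≤ 1 := by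
  rcases le_or_gt (a + 1 - a * s) 0 with hneg | hpos
  · exact (mul_nonpos_of_nonneg_of_nonpos (rpow_nonneg hs a) hneg).trans zero_le_one
  have ha1 : 0 < a + 1 := by linarith
  have amgm : s ^ (a / (a + 1)) * (a + 1 - a * s) ^ (1 / (a + 1)) ≤ 1 := by
    calc s ^ (a / (a + 1)) * (a + 1 - a * s) ^ (1 / (a + 1))
        ≤ a / (a + 1) * s + 1 / (a + 1) * (a + 1 - a * s) :=
          geom_mean_le_arith_mean2_weighted (by positivity) (by positivity) hs hpos.le
            (by field_simp)
      _ = 1 := by field_simp; ring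
  calc s ^ a * (a + 1 - a * s)
      = (s ^ (a / (a + 1)) * (a + 1 - a * s) ^ (1 / (a + 1))) ^ (a + 1) := by
        rw [mul_rpow (by positivity) (by positivity), ← rpow_mul hs, ← rpow_mul hpos.le,
          div_mul_cancel₀ _ ha1.ne', div_mul_cancel₀ _ ha1.ne', rpow_one]
    _ ≤ 1 := rpow_le_one (by positivity) amgm ha1.le

lemma isMaxOn_rpow_mul_one_sub_mul {a c : ℝ} (ha : 0 < a) (hc : 0 < c) :
    IsMaxOn (fun t ↦ t ^ a * (1 - c * t)) (Ici 0) (a / ((a + 1) * c)) := by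
  intro t (ht : 0 ≤ t)
  set m := a / ((a + 1) * c) with hm_def
  have hm : 0 < m := by positivity
  have hcm : c * m = a / (a + 1) := by rw [hm_def]; field_simp
  have hvalue : m ^ a * (1 - c * m) = m ^ a / (a + 1) := by
    rw [hcm]; field_simp; ring
  have hscale : t ^ a * (1 - c * t) = m ^ a / (a + 1) * ((t / m) ^ a * (a + 1 - a * (t / m))) := by
    rw [div_rpow ht hm.le, show c * t = c * m * (t / m) by field_simp, hcm]
    field_simp
  show t ^ a * (1 - c * t) ≤ m ^ a * (1 - c * m)
  rw [hvalue, hscale]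
  exact mul_le_of_le_one_right (by positivity)
    (rpow_mul_add_one_sub_mul_le_one ha (by positivity))

theorem lq_omega_bound_general (q δ ω : ℝ) (hq0 : 0 < q) (hq1 : q ≤ 1)
    (hδ1 : δ < 1) (hω0 : 0 ≤ ω) :
    ω ^ ((2 - q) / q) * (1 - ω) + δ - (1 - δ) * ω ^ (2 / q) ≤
        δ + q / 2 ^ (2 / q) * ((2 - q) / (2 - δ)) ^ (2 / q - 1) ∧
      ((2 - q) / (2 * (2 - δ))) ^ ((2 - q) / q) * (1 - (2 - q) / (2 * (2 - δ))) + δ -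
          (1 - δ) * ((2 - q) / (2 * (2 - δ))) ^ (2 / q) =
        δ + q / 2 ^ (2 / q) * ((2 - q) / (2 - δ)) ^ (2 / q - 1) := by
  set a := (2 - q) / q with ha_def
  have hq2 : 0 < 2 - q := by linarith
  have ha : 0 < a := div_pos hq2 hq0
  have ha1 : a + 1 = 2 / q := by rw [ha_def]; field_simp; ring
  have hc : 0 < 2 - δ := by linarith
  have hargmax : a / ((a + 1) * (2 - δ)) = (2 - q) / (2 * (2 - δ)) := by
    rw [ha1, ha_def]; field_simp
  have hmax : IsMaxOn (fun t ↦ t ^ a * (1 - (2 - δ) * t)) (Ici 0) ((2 - q) / (2 * (2 - δ))) :=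
    hargmax ▸ isMaxOn_rpow_mul_one_sub_mul ha hc
  have hargmax_nonneg : 0 ≤ (2 - q) / (2 * (2 - δ)) := by positivity
  have hform : ∀ t : ℝ, 0 ≤ t →
      t ^ a * (1 - t) + δ - (1 - δ) * t ^ (2 / q) = t ^ a * (1 - (2 - δ) * t) + δ := by
    intro t ht
    rw [← ha1, rpow_add_one' ht (by linarith)]
    ring
  have hbound : ((2 - q) / (2 * (2 - δ))) ^ a * (1 - (2 - δ) * ((2 - q) / (2 * (2 - δ)))) =
      q / 2 ^ (2 / q) * ((2 - q) / (2 - δ)) ^ (2 / q - 1) := by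
    rw [← ha1, add_sub_cancel_right, rpow_add_one two_ne_zero,
      show (2 - q) / (2 - δ) = 2 * ((2 - q) / (2 * (2 - δ))) by field_simp,
      mul_rpow zero_le_two (by positivity)]
    field_simp
    ring
  have hle := isMaxOn_iff.mp hmax ω hω0
  beta_reduce at hle
  rw [hform ω hω0, hform _ hargmax_nonneg, ← hbound]
  exact ⟨by linarith, by ring⟩

theorem lq_omega_bound (q δ ω : ℝ) (hq0 : 0 < q) (hq1 : q ≤ 1)
    (hδ0 : 0 ≤ δ) (hδ1 : δ < 1) (hω0 : 0 ≤ ω) (hω1 : ω ≤ 1) :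
    ω ^ ((2 - q) / q) * (1 - ω) + δ - (1 - δ) * ω ^ (2 / q) ≤
        δ + q / 2 ^ (2 / q) * ((2 - q) / (2 - δ)) ^ (2 / q - 1) ∧
      ((2 - q) / (2 * (2 - δ))) ^ ((2 - q) / q) * (1 - (2 - q) / (2 * (2 - δ))) + δ -
          (1 - δ) * ((2 - q) / (2 * (2 - δ))) ^ (2 / q) =
        δ + q / 2 ^ (2 / q) * ((2 - q) / (2 - δ)) ^ (2 / q - 1) :=
  lq_omega_bound_general q δ ω hq0 hq1 hδ1 hω0
end

section
/- Let x ∈ ℝᵈ with coordinates in a block T_j = {js+1, …, js+s} satisfying |x_{js+1}| ≥ … ≥ |x_{js+s}|. Then √s · ‖x_{T_j}‖₂ ≤ ‖x_{T_j}‖₁ + (s/4)(|x_{js+1}| − |x_{js+s}|). -/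
/-!
Write `a` and `b` for the largest and smallest of the values `|x_i|` on the block. Since every
`t = |x_i|` lies in `[b, a]`, `(a - t) (t - b) ≥ 0`, i.e. `t² ≤ (a + b) t - a b`; summing gives
`‖x‖₂² ≤ (a + b) ‖x‖₁ - s a b`. Completing the square in `‖x‖₁`, the gap between
`(‖x‖₁ + s (a - b) / 4)²` and `s ((a + b) ‖x‖₁ - s a b)` is
`(‖x‖₁ - s (a + 3 b) / 4)² + s² b (a - b) / 2 ≥ 0`.
-/

open Finset

section OrderedRing

variable {R : Type*} [CommRing R] [LinearOrder R] [IsStrictOrderedRing R]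

theorem sq_le_add_mul_sub_mul_of_mem_Icc {a b t : R} (ht : t ∈ Set.Icc b a) :
    t ^ 2 ≤ (a + b) * t - a * b := by
  nlinarith [mul_nonneg (sub_nonneg.2 ht.2) (sub_nonneg.2 ht.1)]

theorem sum_sq_le_of_mem_Icc {ι : Type*} (s : Finset ι) {t : ι → R} {a b : R}
    (ht : ∀ i ∈ s, t i ∈ Set.Icc b a) :
    ∑ i ∈ s, t i ^ 2 ≤ (a + b) * ∑ i ∈ s, t i - #s * (a * b) := by
  calc ∑ i ∈ s, t i ^ 2 ≤ ∑ i ∈ s, ((a + b) * t i - a * b) :=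
        sum_le_sum fun i hi => sq_le_add_mul_sub_mul_of_mem_Icc (ht i hi)
    _ = (a + b) * ∑ i ∈ s, t i - #s * (a * b) := by
        rw [sum_sub_distrib, ← mul_sum, sum_const, nsmul_eq_mul]

end OrderedRing

theorem mul_le_sq_of_le_add_mul_sub_mul {K : Type*} [Field K] [LinearOrder K]
    [IsStrictOrderedRing K] {n L Q a b : K} (hn : 0 ≤ n) (hb : 0 ≤ b) (hba : b ≤ a)
    (hQ : Q ≤ (a + b) * L - n * (a * b)) :
    n * Q ≤ (L + n / 4 * (a - b)) ^ 2 := by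
  nlinarith [sq_nonneg (L - n * (a + 3 * b) / 4),
    mul_nonneg (mul_nonneg hn hn) (mul_nonneg hb (sub_nonneg.2 hba)),
    mul_le_mul_of_nonneg_left hQ hn]

theorem sqrt_card_mul_sqrt_sum_sq_le {ι : Type*} (s : Finset ι) {t : ι → ℝ} {a b : ℝ}
    (hb : 0 ≤ b) (hba : b ≤ a) (ht : ∀ i ∈ s, t i ∈ Set.Icc b a) :
    √(#s : ℝ) * √(∑ i ∈ s, t i ^ 2) ≤ ∑ i ∈ s, t i + #s / 4 * (a - b) := by
  have hsum : 0 ≤ ∑ i ∈ s, t i := sum_nonneg fun i hi => hb.trans (ht i hi).1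
  rw [← Real.sqrt_mul (Nat.cast_nonneg _), Real.sqrt_le_left (by positivity)]
  exact mul_le_sq_of_le_add_mul_sub_mul (Nat.cast_nonneg _) hb hba (sum_sq_le_of_mem_Icc s ht)

theorem shifting_inequality {s : ℕ} (hs : 0 < s) (y : Fin s → ℝ)
    (hmono : ∀ i j : Fin s, i ≤ j → |y j| ≤ |y i|) :
    Real.sqrt s * Real.sqrt (∑ i, (y i) ^ 2) ≤
      ∑ i, |y i| + (s : ℝ) / 4 * (|y ⟨0, hs⟩| - |y ⟨s - 1, Nat.sub_lt hs one_pos⟩|) := by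
  have hbounds : ∀ i ∈ (univ : Finset (Fin s)),
      |y i| ∈ Set.Icc |y ⟨s - 1, Nat.sub_lt hs one_pos⟩| |y ⟨0, hs⟩| := fun i _ =>
    ⟨hmono i _ (Fin.le_def.2 (Nat.le_sub_one_of_lt i.2)),
      hmono _ i (Fin.le_def.2 (Nat.zero_le _))⟩
  simpa [sq_abs] using sqrt_card_mul_sqrt_sum_sq_le univ (abs_nonneg _)
    (hmono _ _ (Fin.le_def.2 (Nat.zero_le _))) hbounds
end

section
/- Let 0 < q ≤ 1 and let x ∈ ℝᵈ restricted to a block T_j of s consecutive indices on which |x_{js+1}| ≥ … ≥ |x_{js+s}|. Then s^{1/q − 1/2} ‖x_{T_j}‖₂ ≤ ‖x_{T_j}‖_q + s^{1/q} (|x_{js+1}| − |x_{js+s}|), where ‖x_{T_j}‖_q = (∑_{i∈T_j} |x_i|^q)^{1/q}. -/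
/-!
Since the block is nonincreasing in absolute value, its ℓ₂ norm is at most `√s · |y₀|` and its
ℓ_q quasinorm is at least `s^{1/q} · |y_{s-1}|`. Multiplying the first bound by `s^{1/q - 1/2}`
gives `s^{1/q} · |y₀| = s^{1/q} · |y_{s-1}| + s^{1/q} (|y₀| - |y_{s-1}|)`, and the first summand is
dominated by the ℓ_q quasinorm.
-/

open Finset Real

lemma sqrt_sum_sq_le_sqrt_card_mul {ι : Type*} [Fintype ι] {f : ι → ℝ} {M : ℝ}
    (hM : 0 ≤ M) (hf : ∀ i, |f i| ≤ M) :
    √(∑ i, f i ^ 2) ≤ √(Fintype.card ι) * M := by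
  have hsum : ∑ i, f i ^ 2 ≤ Fintype.card ι * M ^ 2 := by
    calc ∑ i, f i ^ 2 ≤ ∑ _i : ι, M ^ 2 :=
          sum_le_sum fun i _ => sq_le_sq' (abs_le.mp (hf i)).1 (abs_le.mp (hf i)).2
      _ = Fintype.card ι * M ^ 2 := by simp
  calc √(∑ i, f i ^ 2) ≤ √(Fintype.card ι * M ^ 2) := sqrt_le_sqrt hsum
    _ = √(Fintype.card ι) * M := by rw [sqrt_mul (Nat.cast_nonneg _), sqrt_sq hM]

lemma card_rpow_mul_le_sum_rpow_rpow {ι : Type*} [Fintype ι] {g : ι → ℝ} {m q : ℝ}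
    (hq : 0 < q) (hm : 0 ≤ m) (hg : ∀ i, m ≤ g i) :
    (Fintype.card ι : ℝ) ^ (1 / q) * m ≤ (∑ i, g i ^ q) ^ (1 / q) := by
  have hsum : Fintype.card ι * m ^ q ≤ ∑ i, g i ^ q := by
    calc (Fintype.card ι : ℝ) * m ^ q = ∑ _i : ι, m ^ q := by simp
      _ ≤ ∑ i, g i ^ q := sum_le_sum fun i _ => rpow_le_rpow hm (hg i) hq.le
  calc (Fintype.card ι : ℝ) ^ (1 / q) * m = (Fintype.card ι * m ^ q) ^ (1 / q) := by
        rw [mul_rpow (Nat.cast_nonneg _) (rpow_nonneg hm q), ← rpow_mul hm,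
          mul_one_div_cancel hq.ne', rpow_one]
    _ ≤ (∑ i, g i ^ q) ^ (1 / q) := rpow_le_rpow (by positivity) hsum (by positivity)

lemma rpow_sub_half_mul_sqrt {x : ℝ} (hx : 0 < x) (p : ℝ) : x ^ (p - 1 / 2) * √x = x ^ p := by
  rw [sqrt_eq_rpow, ← rpow_add hx, sub_add_cancel]

theorem shifting_inequality_lq_general {s : ℕ} (hs : 0 < s) (q : ℝ)
    (hq0 : 0 < q) (y : Fin s → ℝ)
    (hmono : ∀ i j : Fin s, i ≤ j → |y j| ≤ |y i|) :
    (s : ℝ) ^ (1 / q - 1 / 2) * Real.sqrt (∑ i, (y i) ^ 2) ≤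
      (∑ i, |y i| ^ q) ^ (1 / q) +
        (s : ℝ) ^ (1 / q) * (|y ⟨0, hs⟩| - |y ⟨s - 1, Nat.sub_lt hs one_pos⟩|) := by
  set first := |y ⟨0, hs⟩|
  set last := |y ⟨s - 1, Nat.sub_lt hs one_pos⟩|
  have hℓ₂ : √(∑ i, y i ^ 2) ≤ √s * first := by
    simpa using sqrt_sum_sq_le_sqrt_card_mul (abs_nonneg _)
      fun i => hmono _ i (Fin.mk_le_mk.mpr (Nat.zero_le _))
  have hℓq : (s : ℝ) ^ (1 / q) * last ≤ (∑ i, |y i| ^ q) ^ (1 / q) := by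
    simpa using card_rpow_mul_le_sum_rpow_rpow (g := fun i => |y i|) hq0 (abs_nonneg _)
      fun i => hmono i _ (Fin.mk_le_mk.mpr (Nat.le_sub_one_of_lt i.isLt))
  calc (s : ℝ) ^ (1 / q - 1 / 2) * √(∑ i, y i ^ 2)
      ≤ (s : ℝ) ^ (1 / q - 1 / 2) * (√s * first) := by gcongr
    _ = (s : ℝ) ^ (1 / q) * last + (s : ℝ) ^ (1 / q) * (first - last) := by
        rw [← mul_assoc, rpow_sub_half_mul_sqrt (by exact_mod_cast hs)]
        ring
    _ ≤ _ := by gcongr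

theorem shifting_inequality_lq {s : ℕ} (hs : 0 < s) (q : ℝ)
    (hq0 : 0 < q) (hq1 : q ≤ 1) (y : Fin s → ℝ)
    (hmono : ∀ i j : Fin s, i ≤ j → |y j| ≤ |y i|) :
    (s : ℝ) ^ (1 / q - 1 / 2) * Real.sqrt (∑ i, (y i) ^ 2) ≤
      (∑ i, |y i| ^ q) ^ (1 / q) +
        (s : ℝ) ^ (1 / q) * (|y ⟨0, hs⟩| - |y ⟨s - 1, Nat.sub_lt hs one_pos⟩|) :=
  shifting_inequality_lq_general hs q hq0 y hmono
end
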